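/- An LD-resolvent of a well-moded query and a well-moded clause that is variable-disjoint with it is well-moded. Precisely: let A, Ā be a well-moded query with leftmost atom A, let H ← B̄ be a well-moded clause sharing no variables with the query, and let θ be a most general unifier of A and H; then the LD-resolvent (B̄, Ā)θ is a well-moded query. -/

import Mathlib

/-! The inputs of the leftmost atom `A` of a well-moded query are ground, hence so are those of
`Hθ = Aθ`. Substitution preserves well-modedness, so `B̄θ` is well-moded on its own, and by the
head condition of the clause its outputs cover `Var(Hθ outputs) = Var(Aθ outputs)`, which is all
that the atoms of `Āθ` could have needed from `Aθ`. -/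

/-- First-order terms over function symbols `F` and variables `V`. -/
inductive Term (F V : Type) : Type where
  | var : V → Term F V
  | fn  : F → List (Term F V) → Term F V

namespace Term

/-- `VarIn v t` holds iff the variable `v` occurs in the term `t`. -/
inductive VarIn {F V : Type} : V → Term F V → Prop where
  | var (v : V) : VarIn v (.var v)
  | fn {v : V} (f : F) {args : List (Term F V)} {t : Term F V} :
      t ∈ args → VarIn v t → VarIn v (.fn f args)

/-- Application of a substitution (a map from variables to terms) to a term. -/
def subst {F V : Type} (σ : V → Term F V) : Term F V → Term F V
  | .var v => σ v
  | .fn f args => .fn f (args.attach.map fun t => subst σ t.1)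
termination_by t => sizeOf t
decreasing_by
  have := List.sizeOf_lt_of_mem t.2
  simp only [Term.fn.sizeOf_spec]
  omega

end Term

/-- The set of variables occurring in a list (tuple) of terms. -/
def varsOf {F V : Type} (ts : List (Term F V)) : Set V :=
  {v | ∃ t ∈ ts, Term.VarIn v t}

/-- An atom `p(s̄, t̄)`: a relation symbol together with the tuple of terms
filling its input positions and the tuple filling its output positions. -/
structure Atom (P F V : Type) where
  pred : P
  inputs : List (Term F V)
  outputs : List (Term F V)

/-- Application of a substitution to an atom. -/
def Atom.subst {P F V : Type} (σ : V → Term F V) (A : Atom P F V) : Atom P F V :=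
  ⟨A.pred, A.inputs.map (Term.subst σ), A.outputs.map (Term.subst σ)⟩

/-- The set of variables occurring in an atom. -/
def Atom.vars {P F V : Type} (A : Atom P F V) : Set V :=
  varsOf A.inputs ∪ varsOf A.outputs

/-- The set of variables occurring in a query (a list of atoms). -/
def queryVars {P F V : Type} (Q : List (Atom P F V)) : Set V :=
  {v | ∃ a ∈ Q, v ∈ a.vars}

/-- A query `p_1(s̄_1,t̄_1), …, p_n(s̄_n,t̄_n)` is well-moded iff for every `i`,
`Var(s̄_i) ⊆ ⋃_{j=1}^{i-1} Var(t̄_j)`. -/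
def WellModedQuery {P F V : Type} (Q : List (Atom P F V)) : Prop :=
  ∀ i (h : i < Q.length),
    varsOf (Q.get ⟨i, h⟩).inputs ⊆ varsOf (((Q.take i).map Atom.outputs).flatten)

/-- A clause `p_0(t̄_0, s̄_{n+1}) ← p_1(s̄_1,t̄_1), …, p_n(s̄_n,t̄_n)` (with head
input tuple `t̄_0 = head.inputs` and head output tuple `s̄_{n+1} = head.outputs`)
is well-moded iff for every `i ∈ [1, n+1]`, `Var(s̄_i) ⊆ ⋃_{j=0}^{i-1} Var(t̄_j)`. -/
def WellModedClause {P F V : Type} (head : Atom P F V) (body : List (Atom P F V)) : Prop :=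
  (∀ i (h : i < body.length),
    varsOf (body.get ⟨i, h⟩).inputs ⊆
      varsOf (head.inputs ++ ((body.take i).map Atom.outputs).flatten)) ∧
  varsOf head.outputs ⊆ varsOf (head.inputs ++ (body.map Atom.outputs).flatten)

/-- Composition of substitutions: first apply `θ`, then `τ`. -/
def Subst.comp {F V : Type} (θ τ : V → Term F V) : V → Term F V :=
  fun v => (θ v).subst τ

/-- `θ` is a unifier of the atoms `A` and `H` iff `Aθ = Hθ`. -/
def IsUnifier {P F V : Type} (θ : V → Term F V) (A H : Atom P F V) : Prop :=
  A.subst θ = H.subst θ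

/-- `θ` is a most general unifier of `A` and `H` iff it is a unifier and every
unifier of `A` and `H` factors through it. -/
def IsMGU {P F V : Type} (θ : V → Term F V) (A H : Atom P F V) : Prop :=
  IsUnifier θ A H ∧ ∀ σ : V → Term F V, IsUnifier σ A H → ∃ τ : V → Term F V,
    ∀ v, σ v = (θ v).subst τ
namespace Term

variable {F V : Type}

theorem varIn_fn_iff {v : V} {f : F} {args : List (Term F V)} :
    VarIn v (.fn f args) ↔ ∃ t ∈ args, VarIn v t := by
  constructor
  · rintro (_ | ⟨_, ht, hv⟩)
    exact ⟨_, ht, hv⟩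
  · rintro ⟨t, ht, hv⟩
    exact .fn f ht hv

theorem varIn_subst (θ : V → Term F V) (v : V) :
    ∀ t : Term F V, VarIn v (t.subst θ) ↔ ∃ w, VarIn w t ∧ VarIn v (θ w)
  | .var u => by
      rw [subst]
      constructor
      · exact fun h => ⟨u, .var u, h⟩
      · rintro ⟨w, ⟨⟩, hv⟩
        exact hv
  | .fn f args => by
      rw [subst, varIn_fn_iff]
      constructor
      · rintro ⟨_, hmem, hv⟩
        obtain ⟨⟨s, hs⟩, -, rfl⟩ := List.mem_map.mp hmem
        obtain ⟨w, hw, hvw⟩ := (varIn_subst θ v s).mp hv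
        exact ⟨w, .fn f hs hw, hvw⟩
      · rintro ⟨w, hw, hvw⟩
        obtain ⟨s, hs, hws⟩ := varIn_fn_iff.mp hw
        exact ⟨_, List.mem_map.mpr ⟨⟨s, hs⟩, List.mem_attach _ _, rfl⟩,
          (varIn_subst θ v s).mpr ⟨w, hws, hvw⟩⟩
termination_by t => sizeOf t
decreasing_by
  all_goals
    have := List.sizeOf_lt_of_mem hs
    simp only [Term.fn.sizeOf_spec]
    omega

end Term

section VarsOf

variable {F V : Type}

theorem varsOf_append (ts us : List (Term F V)) :
    varsOf (ts ++ us) = varsOf ts ∪ varsOf us := by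
  ext v
  simp only [varsOf, Set.mem_ofPred_eq, List.mem_append, Set.mem_union, or_and_right, exists_or]

@[simp]
theorem varsOf_nil : varsOf ([] : List (Term F V)) = ∅ := by
  simp [varsOf]

theorem mem_varsOf_map_subst {θ : V → Term F V} {v : V} {ts : List (Term F V)} :
    v ∈ varsOf (ts.map (Term.subst θ)) ↔ ∃ w ∈ varsOf ts, Term.VarIn v (θ w) := by
  constructor
  · rintro ⟨_, ht', hv⟩
    obtain ⟨t, ht, rfl⟩ := List.mem_map.mp ht'
    obtain ⟨w, hw, hvw⟩ := (Term.varIn_subst θ v t).mp hv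
    exact ⟨w, ⟨t, ht, hw⟩, hvw⟩
  · rintro ⟨w, ⟨t, ht, hw⟩, hv⟩
    exact ⟨_, List.mem_map_of_mem ht, (Term.varIn_subst θ v t).mpr ⟨w, hw, hv⟩⟩

theorem varsOf_map_subst_mono (θ : V → Term F V) {ts us : List (Term F V)}
    (h : varsOf ts ⊆ varsOf us) :
    varsOf (ts.map (Term.subst θ)) ⊆ varsOf (us.map (Term.subst θ)) := by
  intro v hv
  obtain ⟨w, hw, hvw⟩ := mem_varsOf_map_subst.mp hv
  exact mem_varsOf_map_subst.mpr ⟨w, h hw, hvw⟩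

theorem varsOf_map_subst_eq_empty (θ : V → Term F V) {ts : List (Term F V)}
    (h : varsOf ts = ∅) : varsOf (ts.map (Term.subst θ)) = ∅ :=
  Set.eq_empty_of_forall_notMem fun _ hv => by
    obtain ⟨w, hw, -⟩ := mem_varsOf_map_subst.mp hv
    simp [h] at hw

end VarsOf

section WellModed

variable {P F V : Type}

theorem outputs_flatten_map_subst (θ : V → Term F V) (Q : List (Atom P F V)) :
    ((Q.map (Atom.subst θ)).map Atom.outputs).flatten
      = ((Q.map Atom.outputs).flatten).map (Term.subst θ) := by
  rw [List.map_flatten, List.map_map, List.map_map]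
  rfl

/-- `WellModedQuery Q` is `WellModedAfter [] Q`, and `WellModedClause H B` is
`WellModedAfter H.inputs B` together with a condition on `H.outputs`. -/
def WellModedAfter (ts : List (Term F V)) (Q : List (Atom P F V)) : Prop :=
  ∀ i (h : i < Q.length),
    varsOf (Q.get ⟨i, h⟩).inputs ⊆ varsOf (ts ++ ((Q.take i).map Atom.outputs).flatten)

namespace WellModedAfter

theorem mono {ts us : List (Term F V)} {Q : List (Atom P F V)} (hts : varsOf ts ⊆ varsOf us)
    (h : WellModedAfter ts Q) : WellModedAfter us Q := by
  intro i hi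
  refine (h i hi).trans ?_
  rw [varsOf_append, varsOf_append]
  exact Set.union_subset_union_left _ hts

theorem subst (θ : V → Term F V) {ts : List (Term F V)} {Q : List (Atom P F V)}
    (h : WellModedAfter ts Q) :
    WellModedAfter (ts.map (Term.subst θ)) (Q.map (Atom.subst θ)) := by
  intro i hi
  rw [List.length_map] at hi
  simpa only [List.get_eq_getElem, List.getElem_map, Atom.subst, ← List.map_take,
    outputs_flatten_map_subst, List.map_append] using varsOf_map_subst_mono θ (h i hi)

theorem inputs_head {ts : List (Term F V)} {A : Atom P F V} {Q : List (Atom P F V)}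
    (h : WellModedAfter ts (A :: Q)) : varsOf A.inputs ⊆ varsOf ts := by
  simpa using h 0 (Nat.zero_lt_succ _)

theorem tail {ts : List (Term F V)} {A : Atom P F V} {Q : List (Atom P F V)}
    (h : WellModedAfter ts (A :: Q)) : WellModedAfter (ts ++ A.outputs) Q := by
  intro i hi
  simpa [List.append_assoc] using h (i + 1) (Nat.succ_lt_succ hi)

theorem append {ts : List (Term F V)} {Q₁ Q₂ : List (Atom P F V)}
    (h₁ : WellModedAfter ts Q₁) (h₂ : WellModedAfter (ts ++ (Q₁.map Atom.outputs).flatten) Q₂) :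
    WellModedAfter ts (Q₁ ++ Q₂) := by
  intro i hi
  simp only [List.get_eq_getElem]
  by_cases hi₁ : i < Q₁.length
  · rw [List.getElem_append_left hi₁, List.take_append_of_le_length hi₁.le]
    exact h₁ i hi₁
  · obtain ⟨k, rfl⟩ := Nat.exists_eq_add_of_le (Nat.le_of_not_lt hi₁)
    rw [List.length_append] at hi
    rw [List.getElem_append_right (Nat.le_add_right _ _), List.take_length_add_append]
    simpa [List.append_assoc] using h₂ k (by omega)

end WellModedAfter

end WellModed

theorem ld_resolvent_well_moded_general
    {P F V : Type} (A : Atom P F V) (Abar : List (Atom P F V))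
    (H : Atom P F V) (Bbar : List (Atom P F V)) (θ : V → Term F V)
    (hquery : WellModedQuery (A :: Abar))
    (hclause : WellModedClause H Bbar)
    (hmgu : IsMGU θ A H) :
    WellModedQuery ((Bbar ++ Abar).map (Atom.subst θ)) := by
  have hq : WellModedAfter [] (A :: Abar) := hquery
  have hcl : WellModedAfter H.inputs Bbar := hclause.1
  have hin : A.inputs.map (Term.subst θ) = H.inputs.map (Term.subst θ) :=
    congrArg Atom.inputs hmgu.1
  have hout : A.outputs.map (Term.subst θ) = H.outputs.map (Term.subst θ) :=
    congrArg Atom.outputs hmgu.1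
  have hH_ground : varsOf (H.inputs.map (Term.subst θ)) = ∅ := by
    rw [← hin]
    exact varsOf_map_subst_eq_empty θ (by simpa using hq.inputs_head)
  have hbody : WellModedAfter [] (Bbar.map (Atom.subst θ)) :=
    (hcl.subst θ).mono (by rw [hH_ground, varsOf_nil])
  have hheads : varsOf (A.outputs.map (Term.subst θ))
      ⊆ varsOf ((Bbar.map (Atom.subst θ)).map Atom.outputs).flatten := by
    have := varsOf_map_subst_mono θ hclause.2
    rwa [List.map_append, varsOf_append, hH_ground, Set.empty_union, ← hout,
      ← outputs_flatten_map_subst] at this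
  have htail : WellModedAfter (A.outputs.map (Term.subst θ)) (Abar.map (Atom.subst θ)) := by
    simpa using hq.tail.subst θ
  rw [List.map_append]
  exact hbody.append (htail.mono (by simpa using hheads))

/-- An LD-resolvent of a well-moded query and a well-moded clause that is
variable-disjoint with it is well-moded: if `A :: Abar` is a well-moded query
with leftmost atom `A`, `H ← Bbar` is a well-moded clause sharing no variables
with the query, and `θ` is a most general unifier of `A` and `H`, then the
LD-resolvent `(Bbar ++ Abar)θ` is a well-moded query. -/
theorem ld_resolvent_well_moded
    {P F V : Type} (A : Atom P F V) (Abar : List (Atom P F V))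
    (H : Atom P F V) (Bbar : List (Atom P F V)) (θ : V → Term F V)
    (hquery : WellModedQuery (A :: Abar))
    (hclause : WellModedClause H Bbar)
    (hdisj : Disjoint (queryVars (A :: Abar)) (H.vars ∪ queryVars Bbar))
    (hmgu : IsMGU θ A H) :
    WellModedQuery ((Bbar ++ Abar).map (Atom.subst θ)) :=
  ld_resolvent_well_moded_general A Abar H Bbar θ hquery hclause hmgu
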